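/- There exists an absolute constant C > 0 such that for every integer N ≥ 2 and every N×N unitary matrix U, the number of eigenvalue angles with |θ_j| < 1/N satisfies #{ j : |θ_j| < 1/N } ≤ C · ( N + | (P′_U/P_U)(1 − 1/N) | ) / N. -/

import Mathlib

open Matrix
open scoped Classical

/-- The multiset of eigenvalues of `U` (roots of its characteristic polynomial,
listed with multiplicity); each eigenvalue is `e^{iθ_j}` with `θ_j = arg` in `(-π, π]`. -/
noncomputable def eigenvalues (N : ℕ) (U : Matrix.unitaryGroup (Fin N) ℂ) : Multiset ℂ :=
  (Matrix.charpoly (U : Matrix (Fin N) (Fin N) ℂ)).roots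

/-!
With `x = 1 - 1/N`, every eigenvalue `λ` on the unit circle has `Re (x - λ)⁻¹ ≤ 1`, while an
eigenvalue with `|arg λ| < 1/N` lies within distance `√2/N` of `x` and to its right by at least
`3/(4N)`, so that `Re (x - λ)⁻¹ ≤ -3N/8`. Summing over the spectrum, `k` small angles force
`Re Σ (x - λ)⁻¹ ≤ N - k (3N/8 + 1)`, hence `k · 3N/8 ≤ N + |Σ (x - λ)⁻¹|`, which gives `C = 3`.
-/

theorem Multiset.sum_map_add_card_filter_mul_le {α : Type*} (m : Multiset α) (p : α → Prop)
    [DecidablePred p] (f : α → ℝ) {a b : ℝ} (hp : ∀ x ∈ m, p x → f x ≤ -a)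
    (hnp : ∀ x ∈ m, ¬p x → f x ≤ b) :
    (m.map f).sum + (m.filter p).card * (a + b) ≤ card m * b := by
  have hsplit : (m.map f).sum
      = ((m.filter p).map f).sum + ((m.filter fun x => ¬p x).map f).sum := by
    rw [← Multiset.sum_add, ← Multiset.map_add, Multiset.filter_add_not]
  have hcard : card (m.filter p) + card (m.filter fun x => ¬p x) = card m := by
    rw [← Multiset.card_add, Multiset.filter_add_not]
  have h₁ := Multiset.sum_le_card_nsmul ((m.filter p).map f) (-a) <|
    Multiset.forall_mem_map_iff.mpr fun x hx => (Multiset.mem_filter.mp hx).elim (hp x)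
  have h₂ := Multiset.sum_le_card_nsmul ((m.filter fun x => ¬p x).map f) b <|
    Multiset.forall_mem_map_iff.mpr fun x hx => (Multiset.mem_filter.mp hx).elim (hnp x)
  rw [Multiset.card_map, nsmul_eq_mul] at h₁ h₂
  rw [← hcard, hsplit]
  push_cast
  linarith

namespace Complex

theorem re_inv_le_neg_div {w : ℂ} {a b : ℝ} (ha : 0 < a) (hre : w.re ≤ -a)
    (hw : normSq w ≤ b) : w⁻¹.re ≤ -a / b := by
  have hpos : 0 < normSq w := by
    rw [normSq_apply]; nlinarith [mul_self_nonneg w.im]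
  rw [inv_re, div_le_div_iff₀ hpos (hpos.trans_le hw)]
  nlinarith

theorem re_inv_ofReal_sub_le_one {x : ℝ} (hx₀ : 0 ≤ x) (hx₁ : x ≤ 1) {z : ℂ} (hz : ‖z‖ = 1) :
    ((x : ℂ) - z)⁻¹.re ≤ 1 := by
  have hz' : z.re * z.re + z.im * z.im = 1 := by
    rw [← normSq_apply, normSq_eq_norm_sq, hz, one_pow]
  have hre₁ : z.re ≤ 1 := by nlinarith [mul_self_nonneg z.im]
  have hre₂ : -1 ≤ z.re := by nlinarith [mul_self_nonneg z.im]
  rw [inv_re]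
  rcases (normSq_nonneg ((x : ℂ) - z)).eq_or_lt with h | h
  · simp [← h]
  rw [div_le_one h, normSq_apply]
  simp only [sub_re, ofReal_re, sub_im, ofReal_im, zero_sub, neg_mul_neg]
  -- the difference is affine in `z.re`; it is nonnegative at both endpoints `z.re = ±1`
  nlinarith [mul_nonneg (by linarith : 0 ≤ 1 + z.re) (mul_nonneg (by linarith : 0 ≤ 1 - x)
      (by linarith : 0 ≤ 2 - x)),
    mul_nonneg (by linarith : 0 ≤ 1 - z.re) (mul_nonneg hx₀ (by linarith : 0 ≤ x + 1))]

theorem one_sub_sq_arg_div_two_le_re {z : ℂ} (hz : ‖z‖ = 1) : 1 - arg z ^ 2 / 2 ≤ z.re := by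
  have hz0 : z ≠ 0 := norm_ne_zero_iff.mp (by rw [hz]; exact one_ne_zero)
  simpa [cos_arg hz0, hz] using Real.one_sub_sq_div_two_le_cos (x := arg z)

theorem abs_im_le_abs_arg {z : ℂ} (hz : ‖z‖ = 1) : |z.im| ≤ |arg z| := by
  simpa [sin_arg, hz] using Real.abs_sin_le_abs (x := arg z)

theorem re_inv_one_sub_sub_le {t : ℝ} (ht₀ : 0 < t) (ht : t ≤ 1 / 2) {z : ℂ} (hz : ‖z‖ = 1)
    (harg : |arg z| < t) : (((1 - t : ℝ) : ℂ) - z)⁻¹.re ≤ -(3 / (8 * t)) := by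
  have harg_sq : arg z ^ 2 ≤ t ^ 2 := by
    rw [← sq_abs]; exact pow_le_pow_left₀ (abs_nonneg _) harg.le 2
  have hre := one_sub_sq_arg_div_two_le_re hz
  have him : z.im ^ 2 ≤ t ^ 2 := by
    rw [← sq_abs]; exact pow_le_pow_left₀ (abs_nonneg _) ((abs_im_le_abs_arg hz).trans harg.le) 2
  have hre₁ : z.re ≤ 1 := (re_le_norm z).trans hz.le
  have hw_re_le : (((1 - t : ℝ) : ℂ) - z).re ≤ -(3 * t / 4) := by
    simp only [sub_re, ofReal_re]; nlinarith
  have hw_re_ge : -t ≤ (((1 - t : ℝ) : ℂ) - z).re := by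
    simp only [sub_re, ofReal_re]; linarith
  have hw : normSq (((1 - t : ℝ) : ℂ) - z) ≤ 2 * t ^ 2 := by
    have : (((1 - t : ℝ) : ℂ) - z).re ^ 2 ≤ t ^ 2 := by nlinarith
    rw [normSq_apply]
    simp only [sub_im, ofReal_im, zero_sub, neg_mul_neg]
    nlinarith
  calc _ ≤ -(3 * t / 4) / (2 * t ^ 2) := re_inv_le_neg_div (by positivity) hw_re_le hw
    _ = -(3 / (8 * t)) := by field_simp; ring

end Complex

open scoped Matrix.Norms.L2Operator in
theorem norm_eq_one_of_mem_eigenvalues {N : ℕ} (U : Matrix.unitaryGroup (Fin N) ℂ) {μ : ℂ}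
    (hμ : μ ∈ eigenvalues N U) : ‖μ‖ = 1 :=
  spectrum.norm_eq_one_of_unitary U.2 <|
    Matrix.mem_spectrum_iff_isRoot_charpoly.mpr (Polynomial.isRoot_of_mem_roots hμ)

theorem card_eigenvalues (N : ℕ) (U : Matrix.unitaryGroup (Fin N) ℂ) :
    Multiset.card (eigenvalues N U) = N := by
  rw [eigenvalues, IsAlgClosed.card_roots_eq_natDegree, Matrix.charpoly_natDegree_eq_dim,
    Fintype.card_fin]

/-- There is an absolute constant `C > 0` such that for every `N ≥ 2` and every
unitary `U`, the number of eigenvalue angles (counted with multiplicity) with `|θ_j| < 1/N`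
is at most `C (N + |(P'_U/P_U)(1 - 1/N)|)/N`. -/
theorem count_small_angles_bound :
    ∃ C : ℝ, 0 < C ∧
      ∀ (N : ℕ), 2 ≤ N → ∀ (U : Matrix.unitaryGroup (Fin N) ℂ),
        (((eigenvalues N U).filter (fun lam => |Complex.arg lam| < 1 / N)).card : ℝ)
          ≤ C * (N + ‖
              (((eigenvalues N U).map (fun lam => (((1 - 1 / N : ℝ) : ℂ) - lam)⁻¹)).sum)‖) / N := by
  refine ⟨3, by norm_num, fun N hN U => ?_⟩
  have hN : (2 : ℝ) ≤ N := by exact_mod_cast hN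
  have ht₀ : (0 : ℝ) < 1 / N := by positivity
  have ht : (1 : ℝ) / N ≤ 1 / 2 := one_div_le_one_div_of_le two_pos hN
  set f := fun lam : ℂ => (((1 - 1 / N : ℝ) : ℂ) - lam)⁻¹
  set k := ((eigenvalues N U).filter (fun lam => |Complex.arg lam| < 1 / N)).card
  have hsum := Multiset.sum_map_add_card_filter_mul_le (eigenvalues N U) _ (fun lam => (f lam).re)
    (fun lam hlam => Complex.re_inv_one_sub_sub_le ht₀ ht (norm_eq_one_of_mem_eigenvalues U hlam))
    (fun lam hlam _ => Complex.re_inv_ofReal_sub_le_one (by linarith) (by linarith)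
      (norm_eq_one_of_mem_eigenvalues U hlam))
  have hre : ((eigenvalues N U).map fun lam => (f lam).re).sum
      = ((eigenvalues N U).map f).sum.re := by
    simpa [Multiset.map_map] using
      (map_multiset_sum Complex.reAddGroupHom ((eigenvalues N U).map f)).symm
  have hnorm : -‖((eigenvalues N U).map f).sum‖ ≤ ((eigenvalues N U).map f).sum.re :=
    neg_le_of_abs_le (Complex.abs_re_le_norm _)
  rw [card_eigenvalues, hre] at hsum
  have h38 : 3 / (8 * (1 / (N : ℝ))) = 3 * N / 8 := by field_simp
  rw [h38] at hsum
  rw [le_div_iff₀ (by positivity)]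
  nlinarith [norm_nonneg (((eigenvalues N U).map f).sum), (Nat.cast_nonneg k : (0 : ℝ) ≤ k)]
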